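/- Let p be a prime number and let exp_p(X) := exp(X + X^p/p + X^{p²}/p² + ⋯) = exp(Σ_{k≥0} X^{p^k}/p^k) ∈ 𝒜 be the Artin–Hasse exponential. Then for every f = exp(Σ_{i≥1} F_i X^i) ∈ 𝒜: exp_p(X) ⋆ f(X) = exp(−Σ_{k≥0} F_{p^k} X^{p^k}). -/

import Mathlib

open PowerSeries

/-- Formal exponential: for `F` with zero constant coefficient this is
`exp F = ∑ F^k / k!` (each coefficient is a finite sum). -/
noncomputable def pexp {A : Type*} [CommRing A] [Algebra ℚ A] (F : PowerSeries A) :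
    PowerSeries A :=
  PowerSeries.mk fun n =>
    ∑ k ∈ Finset.range (n + 1), ((k.factorial : ℚ)⁻¹) • (PowerSeries.coeff n (F ^ k))

/-- Formal logarithm: for `f` with constant coefficient `1` this is
`log f = ∑_{k≥1} (-1)^{k+1} (f-1)^k / k`; it is the inverse bijection of `pexp`
between `X·A[[X]]` and `𝒜 = 1 + X·A[[X]]`. -/
noncomputable def plog {A : Type*} [CommRing A] [Algebra ℚ A] (f : PowerSeries A) :
    PowerSeries A :=
  PowerSeries.mk fun n =>
    if n = 0 then 0 else
      ∑ k ∈ Finset.range (n + 1), (((-1 : ℚ) ^ (k + 1)) / k) • (PowerSeries.coeff n ((f - 1) ^ k))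

/-- The eñe product: if `f = exp (∑_{i≥1} Fᵢ Xⁱ)` and `g = exp (∑_{i≥1} Gᵢ Xⁱ)` then
`f ⋆ g = exp (−∑_{i≥1} i·Fᵢ·Gᵢ·Xⁱ)`. -/
noncomputable def ene {A : Type*} [CommRing A] [Algebra ℚ A] (f g : PowerSeries A) :
    PowerSeries A :=
  pexp (PowerSeries.mk fun i =>
    -(i : A) * (PowerSeries.coeff i (plog f)) * (PowerSeries.coeff i (plog g)))

section aux
variable {A : Type*} [CommRing A] [Algebra ℚ A]

lemma coeff_pow_eq_zero' {F : PowerSeries A} (hF : constantCoeff F = 0)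
    {n k : ℕ} (h : n < k) : coeff n (F ^ k) = 0 := by
  have hX : (X : A⟦X⟧) ∣ F := X_dvd_iff.mpr hF
  exact X_pow_dvd_iff.mp (pow_dvd_pow_of_dvd hX k) n h

noncomputable def Esum (F : PowerSeries A) (N : ℕ) : PowerSeries A :=
  ∑ k ∈ Finset.range N, ((k.factorial : ℚ)⁻¹) • F ^ k

lemma coeff_Esum (F : PowerSeries A) (N n : ℕ) :
    coeff n (Esum F N) = ∑ k ∈ Finset.range N, ((k.factorial : ℚ)⁻¹) • coeff n (F ^ k) := by
  simp [Esum, coeff_smul]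

lemma coeff_pexp' {F : PowerSeries A} (hF : constantCoeff F = 0) {N n : ℕ} (h : n < N) :
    coeff n (pexp F) = coeff n (Esum F N) := by
  rw [coeff_Esum, pexp, coeff_mk]
  refine Finset.sum_subset (Finset.range_subset_range.2 h) fun k _ hk => ?_
  rw [coeff_pow_eq_zero' hF (by simpa using hk), smul_zero]

lemma derivative_qsmul (q : ℚ) (f : A⟦X⟧) : d⁄dX A (q • f) = q • d⁄dX A f := by
  ext n
  simp [coeff_derivative, coeff_smul, smul_mul_assoc]

lemma derivative_Esum (F : A⟦X⟧) (N : ℕ) :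
    d⁄dX A (Esum F (N + 1)) = Esum F N * d⁄dX A F := by
  rw [Esum, map_sum, Finset.sum_range_succ']
  simp only [derivative_qsmul, Derivation.leibniz_pow]
  rw [Esum, Finset.sum_mul]
  simp only [Nat.factorial_zero, Nat.cast_one, inv_one, pow_zero, Nat.sub_zero, zero_smul,
    smul_zero, add_zero, one_smul]
  refine Finset.sum_congr rfl fun j _ => ?_
  rw [smul_mul_assoc, smul_comm, Nat.add_sub_cancel, smul_eq_mul]
  rw [← Nat.cast_smul_eq_nsmul ℚ (j+1), smul_smul]
  congr 1
  rw [Nat.factorial_succ]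
  push_cast
  field_simp

lemma constantCoeff_pexp (F : PowerSeries A) : constantCoeff (pexp F) = 1 := by
  rw [← coeff_zero_eq_constantCoeff_apply, pexp, coeff_mk]
  simp

lemma derivative_pexp {F : A⟦X⟧} (hF : constantCoeff F = 0) :
    d⁄dX A (pexp F) = d⁄dX A F * pexp F := by
  ext n
  have h1 : coeff n (d⁄dX A (pexp F)) = coeff n (d⁄dX A (Esum F (n + 2))) := by
    rw [coeff_derivative, coeff_derivative, coeff_pexp' hF (by omega : n + 1 < n + 2)]
  rw [h1, derivative_Esum, mul_comm (Esum F (n + 1)), coeff_mul, coeff_mul]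
  refine Finset.sum_congr rfl fun ab hab => ?_
  rw [Finset.HasAntidiagonal.mem_antidiagonal] at hab
  rw [coeff_pexp' hF (show ab.2 < n + 1 by omega)]

noncomputable def Lsum (f : A⟦X⟧) (N : ℕ) : PowerSeries A :=
  ∑ k ∈ Finset.range N, ((((-1 : ℚ) ^ (k + 1)) / k)) • (f - 1) ^ k

lemma coeff_plog' {f : A⟦X⟧} (hf : constantCoeff f = 1) {N n : ℕ} (h : n < N) :
    coeff n (plog f) = coeff n (Lsum f N) := by
  have hg : constantCoeff (f - 1) = 0 := by simp [hf]
  have hL : coeff n (Lsum f N) =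
      ∑ k ∈ Finset.range N, ((((-1 : ℚ) ^ (k + 1)) / k)) • coeff n ((f - 1) ^ k) := by
    simp [Lsum, coeff_smul]
  rw [plog, coeff_mk, hL]
  by_cases hn : n = 0
  · subst hn
    rw [if_pos rfl]
    rw [Finset.sum_eq_single 0]
    · simp
    · intro k _ hk
      rw [coeff_pow_eq_zero' hg (Nat.pos_of_ne_zero hk), smul_zero]
    · exact fun h0 => absurd (Finset.mem_range.mpr h) h0
  · rw [if_neg hn]
    refine Finset.sum_subset (Finset.range_subset_range.2 h) fun k _ hk => ?_
    rw [coeff_pow_eq_zero' hg (by simpa using hk), smul_zero]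

lemma derivative_Lsum (f : A⟦X⟧) (N : ℕ) :
    d⁄dX A (Lsum f (N + 1)) =
      (∑ j ∈ Finset.range N, (1 - f) ^ j) * d⁄dX A f := by
  rw [Lsum, map_sum, Finset.sum_range_succ']
  simp only [derivative_qsmul, Derivation.leibniz_pow]
  rw [Finset.sum_mul]
  simp only [pow_zero, Nat.sub_zero, zero_smul, smul_zero, add_zero, Nat.cast_zero, div_zero]
  refine Finset.sum_congr rfl fun j _ => ?_
  have hd : d⁄dX A (f - 1) = d⁄dX A f := by
    rw [map_sub, Derivation.map_one_eq_zero, sub_zero]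
  rw [hd, Nat.add_sub_cancel, smul_eq_mul]
  rw [← Nat.cast_smul_eq_nsmul ℚ (j + 1), smul_smul]
  have hq : (-1 : ℚ) ^ (j + 1 + 1) / (j + 1 : ℕ) * ((j + 1 : ℕ) : ℚ) = (-1 : ℚ) ^ j := by
    push_cast
    rw [div_mul_cancel₀]
    · ring
    · positivity
  rw [hq]
  have : ((1 : A⟦X⟧) - f) ^ j = ((-1 : ℚ) ^ j) • (f - 1) ^ j := by
    rw [← neg_sub f 1, neg_pow, Algebra.smul_def, map_pow, map_neg, map_one]
  rw [this, smul_mul_assoc]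

lemma geom_aux (f : A⟦X⟧) (N : ℕ) :
    f * ∑ j ∈ Finset.range N, (1 - f) ^ j = 1 - (1 - f) ^ N := by
  have := geom_sum_mul (1 - f) N
  linear_combination -this

lemma mul_derivative_plog {f : A⟦X⟧} (hf : constantCoeff f = 1) :
    f * d⁄dX A (plog f) = d⁄dX A f := by
  have hg : constantCoeff (1 - f) = 0 := by simp [hf]
  ext n
  have h1 : coeff n (f * d⁄dX A (plog f)) = coeff n (f * d⁄dX A (Lsum f (n + 2))) := by
    rw [coeff_mul, coeff_mul]
    refine Finset.sum_congr rfl fun ab hab => ?_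
    rw [Finset.HasAntidiagonal.mem_antidiagonal] at hab
    rw [coeff_derivative, coeff_derivative, coeff_plog' hf (show ab.2 + 1 < n + 2 by omega)]
  rw [h1, derivative_Lsum, ← mul_assoc, geom_aux, sub_mul, one_mul, map_sub]
  have h2 : coeff n ((1 - f) ^ (n + 1) * d⁄dX A f) = 0 := by
    rw [coeff_mul]
    refine Finset.sum_eq_zero fun ab hab => ?_
    rw [Finset.HasAntidiagonal.mem_antidiagonal] at hab
    rw [coeff_pow_eq_zero' hg (show ab.1 < n + 1 by omega), zero_mul]
  rw [h2, sub_zero]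

lemma plog_pexp {F : A⟦X⟧} (hF : constantCoeff F = 0) : plog (pexp F) = F := by
  have h1 : constantCoeff (pexp F) = 1 := constantCoeff_pexp F
  have hu : IsUnit (pexp F) := by
    rw [PowerSeries.isUnit_iff_constantCoeff, h1]; exact isUnit_one
  have hd : d⁄dX A (plog (pexp F)) = d⁄dX A F := by
    refine hu.mul_left_cancel ?_
    rw [mul_derivative_plog h1, derivative_pexp hF, mul_comm]
  ext n
  cases n with
  | zero => rw [← coeff_zero_eq_constantCoeff_apply] at hF; simp [plog, hF]
  | succ n =>
    have := congrArg (coeff n) hd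
    rw [coeff_derivative, coeff_derivative] at this
    have hunit : IsUnit (((n : A) + 1)) := by
      have : ((n : A) + 1) = algebraMap ℚ A ((n : ℚ) + 1) := by push_cast; ring
      rw [this]
      exact (isUnit_iff_ne_zero.mpr (by positivity)).map (algebraMap ℚ A)
    exact hunit.mul_right_cancel this

end aux

open scoped Classical

/-- **Action of the Artin–Hasse exponential**: for a prime `p`, with
`exp_p(X) = exp(∑_{k≥0} X^{p^k}/p^k)` and `f = exp(∑_{i≥1} Fᵢ Xⁱ) ∈ 𝒜`,
`exp_p(X) ⋆ f(X) = exp(−∑_{k≥0} F_{p^k} X^{p^k})`. -/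
theorem ene_artinHasse {A : Type*} [CommRing A] [Algebra ℚ A]
    (p : ℕ) (hp : p.Prime) (F : ℕ → A) (hF0 : F 0 = 0) :
    ene (pexp (PowerSeries.mk fun i =>
          if ∃ k : ℕ, i = p ^ k then ((i : ℚ)⁻¹) • (1 : A) else 0))
        (pexp (PowerSeries.mk F)) =
      pexp (PowerSeries.mk fun i => if ∃ k : ℕ, i = p ^ k then -F i else 0) := by
  have hc1 : constantCoeff (PowerSeries.mk fun i =>
      if ∃ k : ℕ, i = p ^ k then ((i : ℚ)⁻¹) • (1 : A) else 0) = 0 := by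
    rw [← coeff_zero_eq_constantCoeff_apply, coeff_mk, if_neg]
    rintro ⟨k, hk⟩
    exact absurd hk.symm (pow_ne_zero k hp.ne_zero)
  have hc2 : constantCoeff (PowerSeries.mk F) = 0 := by
    rw [← coeff_zero_eq_constantCoeff_apply, coeff_mk, hF0]
  rw [ene, plog_pexp hc1, plog_pexp hc2]
  have hmk : (PowerSeries.mk fun i =>
        -(i : A) * (PowerSeries.coeff i (PowerSeries.mk fun i =>
          if ∃ k : ℕ, i = p ^ k then ((i : ℚ)⁻¹) • (1 : A) else 0)) *
          (PowerSeries.coeff i (PowerSeries.mk F))) =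
      PowerSeries.mk (fun i => if ∃ k : ℕ, i = p ^ k then -F i else 0) := by
    ext i
    simp only [coeff_mk]
    by_cases h : ∃ k : ℕ, i = p ^ k
    · rw [if_pos h, if_pos h]
      obtain ⟨k, hk⟩ := h
      have hi : i ≠ 0 := hk ▸ pow_ne_zero k hp.ne_zero
      have hkey : -(i : A) * ((i : ℚ)⁻¹ • (1 : A)) = -1 := by
        rw [Algebra.smul_def, mul_one, ← map_natCast (algebraMap ℚ A) i, neg_mul, ← map_mul,
          mul_inv_cancel₀ (by exact_mod_cast hi : ((i : ℕ) : ℚ) ≠ 0), map_one]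
      rw [hkey]
      ring
    · rw [if_neg h, if_neg h, mul_zero, zero_mul]
  rw [hmk]
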